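/- arXiv:1105.5145 — 3 statements merged into one kernel-verified Lean document; each statement's English description precedes it below -/
import Mathlib

section
/- Let $(a_n)$ be a convex, decreasing, positive sequence with $a_n \log n \to 0$, let $f(t) = \sum_{j=0}^{\infty}(j+1)(a_j - 2a_{j+1} + a_{j+2}) F_j(t)$ with $F_j$ the Fejér kernel. Then $\int_{-1/2}^{1/2} |f(t) - S_N(f,t)|\,dt \to 0$ as $N \to \infty$, where $S_N(f,t) = \sum_{|n| \le N} \hat{f}(n) e^{2\pi i n t}$ is the $N$th Fourier partial sum; in particular $\lim_{N\to\infty}\int |f - S_N(f)|\,dt$ exists. -/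
/-!
Summing by parts twice writes the partial sum as
`S_{M+1} = ∑_{j<M} (j+1) Δ²a_j F_j + (M+1)(a_M - a_{M+1}) F_M + a_{M+1} D_{M+1}`,
so `f - S_{M+1}` is the tail of the Fejér series minus the last two terms. As `F_j ≥ 0` and
`∫ F_j = 1`, the first two have `L¹` norms `∑_{j ≥ M} (j+1) Δ²a_j` and `(M+1)(a_M - a_{M+1})`,
which tend to `0` by convexity; the last one is at most `a_{M+1} (1 + log (2M+3))`, since
`|D_N t| ≤ min (2N+1) (1 / (2|t|))`, and this tends to `0` because `a_n log n → 0`.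
-/

open Real Set Finset Filter Topology MeasureTheory

/-- The `j`th Fejér kernel. -/
noncomputable def fejer (j : ℕ) (t : ℝ) : ℝ :=
  ∑ n ∈ Finset.Icc (-(j : ℤ)) (j : ℤ),
    (1 - |(n : ℝ)| / (j + 1)) * Real.cos (2 * Real.pi * n * t)

theorem Finset.sum_Icc_neg_natCast_of_even {M : Type*} [AddCommMonoid M] (h : ℤ → M)
    (he : ∀ n, h (-n) = h n) (j : ℕ) :
    ∑ n ∈ Finset.Icc (-(j : ℤ)) j, h n = h 0 + 2 • ∑ k ∈ Finset.Icc 1 j, h k := by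
  induction j with
  | zero => simp
  | succ j ih =>
    have hIcc : Finset.Icc (-((j + 1 : ℕ) : ℤ)) (j + 1 : ℕ)
        = insert (-((j : ℤ) + 1)) (insert ((j : ℤ) + 1) (Finset.Icc (-(j : ℤ)) j)) := by
      ext; simp only [Finset.mem_Icc, Finset.mem_insert]; omega
    rw [hIcc, sum_insert (by simp; omega), sum_insert (by simp), ih, sum_Icc_succ_top (by omega),
      he]
    push_cast
    abel

noncomputable def dirichlet (n : ℕ) (t : ℝ) : ℝ :=
  1 + 2 * ∑ k ∈ Finset.Icc 1 n, cos (2 * π * k * t)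

theorem dirichlet_succ (n : ℕ) (t : ℝ) :
    dirichlet (n + 1) t = dirichlet n t + 2 * cos (2 * π * (n + 1) * t) := by
  rw [dirichlet, dirichlet, sum_Icc_succ_top (by omega)]
  push_cast
  ring

theorem dirichlet_neg (n : ℕ) (t : ℝ) : dirichlet n (-t) = dirichlet n t := by
  simp only [dirichlet, mul_neg, cos_neg]

@[fun_prop]
theorem continuous_dirichlet (n : ℕ) : Continuous (dirichlet n) := by
  unfold dirichlet
  fun_prop

@[fun_prop]
theorem continuous_fejer (j : ℕ) : Continuous (fejer j) := by
  unfold fejer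
  fun_prop

theorem add_one_mul_fejer (j : ℕ) (t : ℝ) :
    (j + 1) * fejer j t
      = j + 1 + 2 * ∑ k ∈ Finset.Icc 1 j, (j + 1 - k : ℝ) * cos (2 * π * k * t) := by
  rw [fejer, Finset.sum_Icc_neg_natCast_of_even _ (fun n => by simp [cos_neg]), nsmul_eq_mul,
    mul_add]
  congr 1
  · simp
  · rw [mul_sum, mul_sum, mul_sum]
    refine sum_congr rfl fun k _ => ?_
    push_cast
    rw [Nat.abs_cast]
    field_simp

theorem add_two_mul_fejer_succ (j : ℕ) (t : ℝ) :
    (j + 2) * fejer (j + 1) t = (j + 1) * fejer j t + dirichlet (j + 1) t := by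
  have h := add_one_mul_fejer (j + 1) t
  push_cast at h
  rw [show (j : ℝ) + 2 = j + 1 + 1 by ring, h, add_one_mul_fejer, dirichlet,
    sum_Icc_succ_top (by omega), sum_Icc_succ_top (by omega),
    show ∑ k ∈ Finset.Icc 1 j, ((j : ℝ) + 1 + 1 - k) * cos (2 * π * k * t)
      = ∑ k ∈ Finset.Icc 1 j, ((j + 1 - k : ℝ) * cos (2 * π * k * t) + cos (2 * π * k * t)) from
      sum_congr rfl fun _ _ => by ring, sum_add_distrib]
  push_cast
  ring

theorem sin_mul_dirichlet (n : ℕ) (t : ℝ) :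
    sin (π * t) * dirichlet n t = sin ((2 * n + 1) * π * t) := by
  induction n with
  | zero => simp [dirichlet]
  | succ n ih =>
    have h := two_mul_sin_mul_cos (π * t) (2 * π * (n + 1) * t)
    rw [show π * t - 2 * π * (n + 1) * t = -((2 * n + 1) * π * t) by ring, sin_neg,
      show π * t + 2 * π * (n + 1) * t = (2 * (n + 1) + 1) * π * t by ring] at h
    rw [dirichlet_succ, mul_add, ih]
    push_cast
    linear_combination h

theorem sin_sq_sub_sin_sq (x y : ℝ) : sin x ^ 2 - sin y ^ 2 = sin (x + y) * sin (x - y) := by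
  rw [sin_add, sin_sub]
  linear_combination sin y ^ 2 * cos_sq_add_sin_sq x - sin x ^ 2 * cos_sq_add_sin_sq y

theorem add_one_mul_fejer_mul_sin_sq (j : ℕ) (t : ℝ) :
    (j + 1) * fejer j t * sin (π * t) ^ 2 = sin ((j + 1) * π * t) ^ 2 := by
  induction j with
  | zero => simp [fejer]
  | succ j ih =>
    have h := sin_sq_sub_sin_sq ((j + 1 + 1) * π * t) ((j + 1) * π * t)
    rw [show (j + 1 + 1) * π * t + (j + 1) * π * t = (2 * (j + 1) + 1) * π * t by ring,
      show (j + 1 + 1) * π * t - (j + 1) * π * t = π * t by ring] at h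
    have hd := sin_mul_dirichlet (j + 1) t
    push_cast at hd ⊢
    linear_combination sin (π * t) ^ 2 * add_two_mul_fejer_succ j t + ih + sin (π * t) * hd - h

/- Off the integers `fejer j t = sin ((j + 1) π t) ^ 2 / ((j + 1) sin (π t) ^ 2)`; the integers
are reached by continuity. -/
theorem fejer_nonneg (j : ℕ) (t : ℝ) : 0 ≤ fejer j t := by
  have hdense : Dense {t : ℝ | sin (π * t) ≠ 0} := by
    refine ((countable_range ((↑) : ℤ → ℝ)).dense_compl ℝ).mono fun t ht => ?_
    simp only [mem_compl_iff, Set.mem_range, not_exists] at ht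
    intro hsin
    obtain ⟨n, hn⟩ := sin_eq_zero_iff.1 hsin
    exact ht n (mul_right_cancel₀ pi_ne_zero (by linarith))
  refine (isClosed_le continuous_const (continuous_fejer j)).closure_subset_iff.2 ?_
    (hdense.closure_eq ▸ mem_univ t)
  intro t (ht : sin (π * t) ≠ 0)
  have h := (add_one_mul_fejer_mul_sin_sq j t).symm ▸ sq_nonneg (sin ((j + 1) * π * t))
  exact nonneg_of_mul_nonneg_right (nonneg_of_mul_nonneg_left h (by positivity)) (by positivity)

theorem integral_cos_two_pi_int_mul (n : ℤ) (hn : n ≠ 0) :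
    ∫ t in (-(1 / 2) : ℝ)..1 / 2, cos (2 * π * n * t) = 0 := by
  have hc : 2 * π * n ≠ 0 := by simp [pi_ne_zero, hn]
  rw [intervalIntegral.integral_comp_mul_left _ hc, integral_cos,
    show 2 * π * n * (1 / 2) = n * π by ring,
    show 2 * π * n * -(1 / 2) = (-n : ℤ) * π by push_cast; ring,
    sin_int_mul_pi, sin_int_mul_pi, sub_zero, smul_zero]

theorem integral_fejer (j : ℕ) : ∫ t in Icc (-(1 / 2) : ℝ) (1 / 2), fejer j t = 1 := by
  unfold fejer
  rw [integral_Icc_eq_integral_Ioc, ← intervalIntegral.integral_of_le (by norm_num),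
    intervalIntegral.integral_finsetSum
      (fun n _ => (by fun_prop : Continuous _).intervalIntegrable _ _), sum_eq_single 0]
  · norm_num
  · intro n _ hn
    rw [intervalIntegral.integral_const_mul, integral_cos_two_pi_int_mul n hn, mul_zero]
  · simp

theorem abs_dirichlet_le (n : ℕ) (t : ℝ) : |dirichlet n t| ≤ 2 * n + 1 := by
  have hsum : |∑ k ∈ Finset.Icc 1 n, cos (2 * π * k * t)| ≤ n := by
    grw [Finset.abs_sum_le_sum_abs]
    simpa using sum_le_sum fun k (_ : k ∈ Finset.Icc 1 n) => abs_cos_le_one (2 * π * k * t)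
  calc |dirichlet n t| ≤ |1| + |2 * ∑ k ∈ Finset.Icc 1 n, cos (2 * π * k * t)| :=
        abs_add_le _ _
    _ ≤ 2 * n + 1 := by rw [abs_one, abs_mul, abs_two]; linarith

theorem abs_dirichlet_le_inv {t : ℝ} (ht₀ : 0 < t) (ht : t ≤ 1 / 2) (n : ℕ) :
    |dirichlet n t| ≤ 1 / (2 * t) := by
  have hsin : 2 * t ≤ sin (π * t) := by
    have := mul_le_sin (x := π * t) (by positivity) (by nlinarith [pi_pos])
    rwa [← mul_assoc, div_mul_cancel₀ _ pi_ne_zero] at this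
  rw [le_div_iff₀ (by positivity), mul_comm]
  calc 2 * t * |dirichlet n t| ≤ |sin (π * t)| * |dirichlet n t| := by
        gcongr; exact hsin.trans (le_abs_self _)
    _ = |sin ((2 * n + 1) * π * t)| := by rw [← abs_mul, sin_mul_dirichlet]
    _ ≤ 1 := abs_sin_le_one _

theorem intervalIntegrable_abs_dirichlet (n : ℕ) (a b : ℝ) :
    IntervalIntegrable (fun t => |dirichlet n t|) volume a b :=
  (continuous_dirichlet n).abs.intervalIntegrable a b

theorem intervalIntegral_abs_dirichlet_le (n : ℕ) :
    ∫ t in (0 : ℝ)..1 / 2, |dirichlet n t| ≤ (1 + log (2 * n + 1)) / 2 := by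
  set c : ℝ := 2 * n + 1
  have hc : 1 ≤ c := by simp [c]
  set δ := 1 / (2 * c)
  have hδ₀ : 0 < δ := by positivity
  have hδ : δ ≤ 1 / 2 := by simp only [δ]; gcongr; linarith
  have hnear : ∫ t in (0 : ℝ)..δ, |dirichlet n t| ≤ 1 / 2 := by
    calc ∫ t in (0 : ℝ)..δ, |dirichlet n t| ≤ ∫ _ in (0 : ℝ)..δ, c :=
          intervalIntegral.integral_mono_on hδ₀.le (intervalIntegrable_abs_dirichlet n _ _)
            intervalIntegrable_const fun t _ => abs_dirichlet_le n t
      _ = 1 / 2 := by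
          simp only [intervalIntegral.integral_const, smul_eq_mul, δ]
          field_simp
          ring
  have hfar : ∫ t in δ..1 / 2, |dirichlet n t| ≤ log c / 2 := by
    calc ∫ t in δ..1 / 2, |dirichlet n t| ≤ ∫ t in δ..1 / 2, 2⁻¹ * (1 / t) := by
          refine intervalIntegral.integral_mono_on hδ (intervalIntegrable_abs_dirichlet n _ _) ?_
            fun t ht => ?_
          · exact (continuousOn_const.mul (continuousOn_const.div continuousOn_id
              fun t ht => (hδ₀.trans_le (uIcc_of_le hδ ▸ ht).1).ne')).intervalIntegrable
          · rw [← one_div (2 : ℝ), one_div_mul_one_div]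
            exact abs_dirichlet_le_inv (hδ₀.trans_le ht.1) ht.2 n
      _ = log c / 2 := by
          rw [intervalIntegral.integral_const_mul, integral_one_div_of_pos hδ₀ (by norm_num)]
          simp only [δ]
          field_simp
  rw [← intervalIntegral.integral_add_adjacent_intervals
    (intervalIntegrable_abs_dirichlet n 0 δ) (intervalIntegrable_abs_dirichlet n δ (1 / 2))]
  linarith

theorem integral_abs_dirichlet_le (n : ℕ) :
    ∫ t in Icc (-(1 / 2) : ℝ) (1 / 2), |dirichlet n t| ≤ 1 + log (2 * n + 1) := by
  have hsymm :
      ∫ t in (-(1 / 2) : ℝ)..0, |dirichlet n t| = ∫ t in (0 : ℝ)..1 / 2, |dirichlet n t| := by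
    simpa [dirichlet_neg] using intervalIntegral.integral_comp_neg (a := -(1 / 2 : ℝ)) (b := 0)
      fun t => |dirichlet n t|
  rw [integral_Icc_eq_integral_Ioc, ← intervalIntegral.integral_of_le (by norm_num),
    ← intervalIntegral.integral_add_adjacent_intervals
      (intervalIntegrable_abs_dirichlet n _ 0) (intervalIntegrable_abs_dirichlet n 0 _), hsymm]
  linarith [intervalIntegral_abs_dirichlet_le n]

section SummableIntegralNorm

variable {α ι E : Type*} [MeasurableSpace α] {μ : Measure α} [NormedAddCommGroup E]
  {F : ι → α → E}

theorem tsum_lintegral_enorm_ne_top_of_summable_integral_norm (hF_int : ∀ i, Integrable (F i) μ)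
    (hF_sum : Summable fun i => ∫ a, ‖F i a‖ ∂μ) : ∑' i, ∫⁻ a, ‖F i a‖ₑ ∂μ ≠ ⊤ := by
  simp_rw [← ofReal_integral_norm_eq_lintegral_enorm (hF_int _)]
  rw [← ENNReal.ofReal_tsum_of_nonneg (fun i => integral_nonneg fun a => norm_nonneg _) hF_sum]
  exact ENNReal.ofReal_ne_top

theorem ae_summable_of_summable_integral_norm [Countable ι] [CompleteSpace E]
    (hF_int : ∀ i, Integrable (F i) μ)
    (hF_sum : Summable fun i => ∫ a, ‖F i a‖ ∂μ) : ∀ᵐ a ∂μ, Summable fun i => F i a := by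
  have hmeas : AEMeasurable (fun a => ∑' i, ‖F i a‖ₑ) μ :=
    AEMeasurable.tsum fun i => (hF_int i).aestronglyMeasurable.enorm
  have hfin := tsum_lintegral_enorm_ne_top_of_summable_integral_norm hF_int hF_sum
  rw [← lintegral_tsum fun i => (hF_int i).aestronglyMeasurable.enorm] at hfin
  filter_upwards [ae_lt_top' hmeas hfin] with a ha
  exact .of_norm (tsum_enorm_ne_top_iff_summable_norm.1 ha.ne)

theorem integrable_tsum_of_summable_integral_norm [Countable ι] [CompleteSpace E]
    [SecondCountableTopology E] [MeasurableSpace E] [BorelSpace E]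
    (hF_int : ∀ i, Integrable (F i) μ)
    (hF_sum : Summable fun i => ∫ a, ‖F i a‖ ∂μ) : Integrable (fun a => ∑' i, F i a) μ := by
  refine ⟨(AEMeasurable.tsum fun i => (hF_int i).aemeasurable).aestronglyMeasurable, ?_⟩
  calc ∫⁻ a, ‖∑' i, F i a‖ₑ ∂μ ≤ ∫⁻ a, ∑' i, ‖F i a‖ₑ ∂μ :=
        lintegral_mono fun a => enorm_tsum_le_tsum_enorm
    _ = ∑' i, ∫⁻ a, ‖F i a‖ₑ ∂μ := lintegral_tsum fun i => (hF_int i).aestronglyMeasurable.enorm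
    _ < ⊤ := (tsum_lintegral_enorm_ne_top_of_summable_integral_norm hF_int hF_sum).lt_top

end SummableIntegralNorm

theorem tendsto_zero_of_tendsto_mul_log {a : ℕ → ℝ}
    (hlog : Tendsto (fun n : ℕ => a n * log n) atTop (𝓝 0)) : Tendsto a atTop (𝓝 0) := by
  refine (hlog.div_atTop (tendsto_log_atTop.comp tendsto_natCast_atTop_atTop)).congr' ?_
  filter_upwards [eventually_ge_atTop 2] with n hn
  have : log n ≠ 0 := (log_pos (by exact_mod_cast hn)).ne'
  simp [this]

theorem eq_zero_of_summable_of_tendsto_natCast_mul {u : ℕ → ℝ} {c : ℝ} (hu : Summable u)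
    (h : Tendsto (fun n : ℕ => n * u n) atTop (𝓝 c)) : c = 0 := by
  by_contra hc
  refine Real.not_summable_one_div_natCast (summable_of_isBigO_nat' hu ?_)
  refine (((h.inv₀ hc).isBigO_one ℝ).mul (Asymptotics.isBigO_refl u atTop)).congr' ?_ (by simp)
  filter_upwards [h.eventually_ne hc, eventually_ne_atTop 0] with n hn hn0
  field_simp [right_ne_zero_of_mul hn]

noncomputable def fejerCoeff (a : ℕ → ℝ) (j : ℕ) : ℝ :=
  (j + 1 : ℝ) * (a j - 2 * a (j + 1) + a (j + 2))

noncomputable def cosPartialSum (a : ℕ → ℝ) (N : ℕ) (t : ℝ) : ℝ :=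
  a 0 + 2 * ∑ n ∈ Finset.Icc 1 N, a n * cos (2 * π * n * t)

theorem sum_range_fejerCoeff (a : ℕ → ℝ) (M : ℕ) :
    ∑ j ∈ range M, fejerCoeff a j = a 0 - a M - M * (a M - a (M + 1)) := by
  induction M with
  | zero => simp
  | succ M ih =>
    rw [sum_range_succ, ih, fejerCoeff]
    push_cast
    ring

theorem cosPartialSum_succ (a : ℕ → ℝ) (M : ℕ) (t : ℝ) :
    cosPartialSum a (M + 1) t = ∑ j ∈ range M, fejerCoeff a j * fejer j t
      + (M + 1) * (a M - a (M + 1)) * fejer M t + a (M + 1) * dirichlet (M + 1) t := by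
  induction M with
  | zero =>
    simp [cosPartialSum, fejer, dirichlet]
    ring
  | succ M ih =>
    have hF := add_two_mul_fejer_succ M t
    have hD := dirichlet_succ (M + 1) t
    have hS : cosPartialSum a (M + 1 + 1) t = cosPartialSum a (M + 1) t
        + 2 * (a (M + 1 + 1) * cos (2 * π * (M + 1 + 1 : ℕ) * t)) := by
      rw [cosPartialSum, cosPartialSum, sum_Icc_succ_top (by omega), mul_add, ← add_assoc]
    rw [hS, sum_range_succ, fejerCoeff]
    push_cast at hD ⊢
    linear_combination ih - a (M + 2) * hD + (a (M + 2) - a (M + 1)) * hF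

section ConvexSequence

variable {a : ℕ → ℝ}

theorem fejerCoeff_nonneg (hconv : ∀ n, 0 ≤ a n - 2 * a (n + 1) + a (n + 2)) (j : ℕ) :
    0 ≤ fejerCoeff a j :=
  mul_nonneg (by positivity) (hconv j)

theorem summable_fejerCoeff (ha : ∀ n, 0 ≤ a n)
    (hconv : ∀ n, 0 ≤ a n - 2 * a (n + 1) + a (n + 2)) (hdec : Antitone a) :
    Summable (fejerCoeff a) := by
  refine summable_of_sum_range_le (c := a 0) (fejerCoeff_nonneg hconv) fun M => ?_
  rw [sum_range_fejerCoeff]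
  have : 0 ≤ (M : ℝ) * (a M - a (M + 1)) :=
    mul_nonneg M.cast_nonneg (sub_nonneg.2 (hdec M.le_succ))
  linarith [ha M]

theorem tendsto_natCast_mul_sub_succ (ha : ∀ n, 0 ≤ a n)
    (hconv : ∀ n, 0 ≤ a n - 2 * a (n + 1) + a (n + 2)) (hdec : Antitone a)
    (ha₀ : Tendsto a atTop (𝓝 0)) :
    Tendsto (fun M : ℕ => M * (a M - a (M + 1))) atTop (𝓝 0) := by
  have hdiff : Summable fun j => a j - a (j + 1) :=
    summable_of_sum_range_le (c := a 0) (fun j => sub_nonneg.2 (hdec j.le_succ)) fun M => by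
      rw [sum_range_sub']
      linarith [ha M]
  have hlim : Tendsto (fun M : ℕ => M * (a M - a (M + 1))) atTop
      (𝓝 (a 0 - 0 - ∑' j, fejerCoeff a j)) := by
    refine ((tendsto_const_nhds.sub ha₀).sub
      (summable_fejerCoeff ha hconv hdec).hasSum.tendsto_sum_nat).congr fun M => ?_
    rw [sum_range_fejerCoeff]
    ring
  -- the limit `hlim` exists, and it is `0` because `a j - a (j + 1)` is summable
  rwa [eq_zero_of_summable_of_tendsto_natCast_mul hdiff hlim] at hlim

theorem tendsto_add_one_mul_sub_succ (ha : ∀ n, 0 ≤ a n)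
    (hconv : ∀ n, 0 ≤ a n - 2 * a (n + 1) + a (n + 2)) (hdec : Antitone a)
    (ha₀ : Tendsto a atTop (𝓝 0)) :
    Tendsto (fun M : ℕ => (M + 1) * (a M - a (M + 1))) atTop (𝓝 0) := by
  have hdiff : Tendsto (fun M => a M - a (M + 1)) atTop (𝓝 0) := by
    simpa using ha₀.sub (ha₀.comp (tendsto_add_atTop_nat 1))
  simpa [add_mul] using (tendsto_natCast_mul_sub_succ ha hconv hdec ha₀).add hdiff

theorem tendsto_mul_one_add_log_two_mul_add_one (ha : ∀ n, 0 ≤ a n)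
    (hlog : Tendsto (fun n : ℕ => a n * log n) atTop (𝓝 0)) :
    Tendsto (fun n : ℕ => a n * (1 + log (2 * n + 1))) atTop (𝓝 0) := by
  have hbound : ∀ᶠ n : ℕ in atTop,
      a n * (1 + log (2 * n + 1)) ≤ (1 + log 3) * a n + a n * log n := by
    filter_upwards [eventually_ge_atTop 1] with n hn
    have hn' : (1 : ℝ) ≤ n := by exact_mod_cast hn
    have : log (2 * n + 1) ≤ log 3 + log n := by
      rw [← log_mul (by norm_num) (by positivity)]
      exact log_le_log (by positivity) (by linarith)
    nlinarith [ha n]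
  have hnonneg (n : ℕ) : 0 ≤ a n * (1 + log (2 * n + 1)) :=
    mul_nonneg (ha n) (add_nonneg zero_le_one (log_nonneg (le_add_of_nonneg_left (by positivity))))
  refine tendsto_of_tendsto_of_tendsto_of_le_of_le' tendsto_const_nhds ?_ (.of_forall hnonneg)
    hbound
  simpa using ((tendsto_zero_of_tendsto_mul_log hlog).const_mul (1 + log 3)).add hlog

theorem abs_tsum_sub_cosPartialSum_succ_le (ha : ∀ n, 0 ≤ a n)
    (hconv : ∀ n, 0 ≤ a n - 2 * a (n + 1) + a (n + 2)) (hdec : Antitone a) {t : ℝ}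
    (hsum : Summable fun j => fejerCoeff a j * fejer j t) (M : ℕ) :
    |∑' j, fejerCoeff a j * fejer j t - cosPartialSum a (M + 1) t|
      ≤ ∑' j, fejerCoeff a (j + M) * fejer (j + M) t + (M + 1) * (a M - a (M + 1)) * fejer M t
        + a (M + 1) * |dirichlet (M + 1) t| := by
  have htail : 0 ≤ ∑' j, fejerCoeff a (j + M) * fejer (j + M) t :=
    tsum_nonneg fun j => mul_nonneg (fejerCoeff_nonneg hconv _) (fejer_nonneg _ t)
  have hlast : 0 ≤ (M + 1) * (a M - a (M + 1)) * fejer M t :=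
    mul_nonneg (mul_nonneg (by positivity) (sub_nonneg.2 (hdec M.le_succ))) (fejer_nonneg M t)
  rw [← hsum.sum_add_tsum_nat_add M, cosPartialSum_succ]
  set W := ∑' j, fejerCoeff a (j + M) * fejer (j + M) t
  set L := (M + 1) * (a M - a (M + 1)) * fejer M t
  calc _ = |W - L - a (M + 1) * dirichlet (M + 1) t| := by ring_nf
    _ ≤ |W - L| + |a (M + 1) * dirichlet (M + 1) t| := abs_sub _ _
    _ ≤ |W| + |L| + |a (M + 1) * dirichlet (M + 1) t| := by gcongr; exact abs_sub _ _
    _ = W + L + a (M + 1) * |dirichlet (M + 1) t| := by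
      rw [abs_of_nonneg htail, abs_of_nonneg hlast, abs_mul, abs_of_nonneg (ha _)]

theorem integral_abs_tsum_sub_cosPartialSum_succ_le (ha : ∀ n, 0 ≤ a n)
    (hconv : ∀ n, 0 ≤ a n - 2 * a (n + 1) + a (n + 2)) (hdec : Antitone a) (M : ℕ) :
    ∫ t in Icc (-(1 / 2) : ℝ) (1 / 2),
        |∑' j, fejerCoeff a j * fejer j t - cosPartialSum a (M + 1) t|
      ≤ ∑' j, fejerCoeff a (j + M) + (M + 1) * (a M - a (M + 1))
        + a (M + 1) * (1 + log (2 * (M + 1 : ℕ) + 1)) := by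
  set μ := volume.restrict (Icc (-(1 / 2) : ℝ) (1 / 2))
  set u : ℕ → ℝ → ℝ := fun j t => fejerCoeff a j * fejer j t
  have hu_int (j : ℕ) : Integrable (u j) μ := (by fun_prop : Continuous (u j)).integrableOn_Icc
  have hu_integral (j : ℕ) : ∫ t, u j t ∂μ = fejerCoeff a j := by
    rw [integral_const_mul, integral_fejer, mul_one]
  have hu_nonneg (j : ℕ) (t : ℝ) : 0 ≤ u j t :=
    mul_nonneg (fejerCoeff_nonneg hconv j) (fejer_nonneg j t)
  have hu_norm_sum : Summable fun j => ∫ t, ‖u (j + M) t‖ ∂μ := by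
    simp_rw [Real.norm_of_nonneg (hu_nonneg _ _), hu_integral]
    exact (summable_nat_add_iff M).2 (summable_fejerCoeff ha hconv hdec)
  -- at `t = 0` the Fejér series may diverge (and `∑'` is then `0`), so only a.e. summability
  have hsum : ∀ᵐ t ∂μ, Summable fun j => u j t := by
    filter_upwards [ae_summable_of_summable_integral_norm (fun j => hu_int (j + M)) hu_norm_sum]
      with t ht using (summable_nat_add_iff M).1 ht
  have htail : ∫ t, ∑' j, u (j + M) t ∂μ = ∑' j, fejerCoeff a (j + M) := by
    rw [← integral_tsum_of_summable_integral_norm (fun j => hu_int _) hu_norm_sum]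
    exact tsum_congr fun j => hu_integral _
  have hlast : Integrable (fun t => (M + 1) * (a M - a (M + 1)) * fejer M t) μ :=
    (by fun_prop : Continuous _).integrableOn_Icc
  have hdir : Integrable (fun t => a (M + 1) * |dirichlet (M + 1) t|) μ :=
    (by fun_prop : Continuous _).integrableOn_Icc
  have htail_int :=
    integrable_tsum_of_summable_integral_norm (fun j => hu_int (j + M)) hu_norm_sum
  have htail_last : Integrable
      (fun t => ∑' j, u (j + M) t + (M + 1) * (a M - a (M + 1)) * fejer M t) μ :=
    htail_int.add hlast
  calc ∫ t, |∑' j, u j t - cosPartialSum a (M + 1) t| ∂μ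
      ≤ ∫ t, (∑' j, u (j + M) t + (M + 1) * (a M - a (M + 1)) * fejer M t
          + a (M + 1) * |dirichlet (M + 1) t|) ∂μ := by
        refine integral_mono_of_nonneg (.of_forall fun t => abs_nonneg _)
          (htail_last.add hdir) ?_
        filter_upwards [hsum] with t ht
        exact abs_tsum_sub_cosPartialSum_succ_le ha hconv hdec ht M
    _ = ∑' j, fejerCoeff a (j + M) + (M + 1) * (a M - a (M + 1))
          + a (M + 1) * ∫ t, |dirichlet (M + 1) t| ∂μ := by
        rw [integral_add htail_last hdir, integral_add htail_int hlast, htail,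
          integral_const_mul, integral_const_mul, integral_fejer, mul_one]
    _ ≤ _ := by grw [integral_abs_dirichlet_le (M + 1)]; exact ha _

end ConvexSequence

theorem stmt_9 (a : ℕ → ℝ)
    (hpos : ∀ n, 0 < a n)
    (hconv : ∀ n, 0 ≤ a n - 2 * a (n + 1) + a (n + 2))
    (hdec : Antitone a)
    (hlog : Filter.Tendsto (fun n : ℕ => a n * Real.log n) Filter.atTop (nhds 0))
    (f : ℝ → ℝ)
    (hf : ∀ t, f t = ∑' j : ℕ, (j + 1 : ℝ) * (a j - 2 * a (j + 1) + a (j + 2)) * fejer j t)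
    -- the `N`th symmetric Fourier partial sum of `f`, whose Fourier coefficients are `a_{|n|}`
    (S : ℕ → ℝ → ℝ)
    (hS : ∀ N t, S N t = a 0 + 2 * ∑ n ∈ Finset.Icc 1 N, a n * Real.cos (2 * Real.pi * n * t)) :
    Filter.Tendsto
      (fun N : ℕ => ∫ t in Set.Icc (-(1/2) : ℝ) (1/2), |f t - S N t|)
      Filter.atTop (nhds 0) := by
  obtain rfl : f = fun t => ∑' j, fejerCoeff a j * fejer j t := funext hf
  obtain rfl : S = cosPartialSum a := funext fun N => funext (hS N)
  have ha : ∀ n, 0 ≤ a n := fun n => (hpos n).le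
  have hbound : Tendsto (fun M : ℕ => ∑' j, fejerCoeff a (j + M) + (M + 1) * (a M - a (M + 1))
      + a (M + 1) * (1 + log (2 * (M + 1 : ℕ) + 1))) atTop (𝓝 0) := by
    have htail := tendsto_sum_nat_add (fejerCoeff a)
    have hlast := tendsto_add_one_mul_sub_succ ha hconv hdec (tendsto_zero_of_tendsto_mul_log hlog)
    have hdir := (tendsto_mul_one_add_log_two_mul_add_one ha hlog).comp (tendsto_add_atTop_nat 1)
    simpa using (htail.add hlast).add hdir
  rw [← tendsto_add_atTop_iff_nat 1]
  exact squeeze_zero (fun M => integral_nonneg fun t => abs_nonneg _)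
    (integral_abs_tsum_sub_cosPartialSum_succ_le ha hconv hdec) hbound
end

section
/- (Vitali–Hahn–Saks type lemma) Let $(X,\mathfrak{M},\mu)$ be a finite positive measure space, and let $f_n \in L^1(\mu)$ be such that $\lim_{n\to\infty} \int_E f_n\,d\mu$ exists for every $E \in \mathfrak{M}$. Then the family $\{f_n\}$ is uniformly integrable: for every $\varepsilon > 0$ there exists $\delta > 0$ such that $\mu(A) < \delta$ implies $\sup_n |\int_A f_n\,d\mu| < \varepsilon$ (equivalently $\sup_n \int_A |f_n|\,d\mu < \varepsilon$). -/
/-!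
The measurable sets of a finite measure space form a complete metric space for the distance
`μ (s ∆ t)`, on which `s ↦ ∫ x in s, f x ∂μ` is continuous for each integrable `f`. Since the
integrals converge, the closed sets `F N = {s | ‖∫_s f n - ∫_s f N‖ ≤ η for all n ≥ N}` cover
this space, so by Baire's theorem some `F N` contains a ball `B(s₀, r)`. Every `A` with
`μ A < r` is the difference `(s₀ ∪ A) \ (s₀ \ A)` of two sets of that ball, which bounds
`∫_A f n` uniformly in `n ≥ N`; the finitely many `f n` with `n < N` are handled by absolute
continuity of the integral. Finally `∫_A |f n|` is split over the sets where `f n` is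
nonnegative and nonpositive.
-/

open MeasureTheory Filter Topology Set
open scoped symmDiff ENNReal

namespace MeasureTheory

variable {α E : Type*} [MeasurableSpace α] {μ : Measure α} [NormedAddCommGroup E] [NormedSpace ℝ E]

lemma norm_setIntegral_sub_setIntegral_le {f : α → E} (hf : Integrable f μ) {s t : Set α}
    (hs : MeasurableSet s) (ht : MeasurableSet t) :
    ‖∫ x in s, f x ∂μ - ∫ x in t, f x ∂μ‖ ≤ ∫ x in s ∆ t, ‖f x‖ ∂μ := by
  rw [← integral_indicator hs, ← integral_indicator ht,
    ← integral_sub (hf.indicator hs) (hf.indicator ht), ← integral_indicator (hs.symmDiff ht)]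
  refine (norm_integral_le_integral_norm _).trans_eq (integral_congr_ae (ae_of_all _ fun x => ?_))
  rw [← norm_indicator_eq_indicator_norm, apply_indicator_symmDiff norm_neg]

lemma integral_abs_lt_two_mul_of_forall_abs_setIntegral_lt {f : α → ℝ} (hf : Integrable f μ)
    {c : ℝ} (h : ∀ s, MeasurableSet s → |∫ x in s, f x ∂μ| < c) : ∫ x, |f x| ∂μ < 2 * c := by
  have h₀ (s : Set α) (hs : NullMeasurableSet s μ) : |∫ x in s, f x ∂μ| < c := by
    rw [← setIntegral_congr_set hs.toMeasurable_ae_eq]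
    exact h _ (measurableSet_toMeasurable μ s)
  have hpos := h₀ _ ((aestronglyMeasurable_const (b := (0 : ℝ))).nullMeasurableSet_le hf.1)
  have hneg := h₀ _ (hf.1.nullMeasurableSet_le (aestronglyMeasurable_const (b := (0 : ℝ))))
  have hsplit := integral_norm_eq_pos_sub_neg hf
  simp only [Real.norm_eq_abs] at hsplit
  rw [hsplit]
  linarith [le_abs_self (∫ x in {x | 0 ≤ f x}, f x ∂μ), neg_abs_le (∫ x in {x | f x ≤ 0}, f x ∂μ)]

namespace MeasuredSets

lemma measurableSet_coe (s : MeasuredSets μ) : MeasurableSet (s : Set α) := s.2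

lemma continuous_setIntegral {f : α → E} (hf : Integrable f μ) :
    Continuous fun s : MeasuredSets μ => ∫ x in s, f x ∂μ := by
  refine continuous_iff_continuousAt.2 fun t => tendsto_iff_norm_sub_tendsto_zero.2 ?_
  refine squeeze_zero (fun _ => norm_nonneg _)
    (fun s => norm_setIntegral_sub_setIntegral_le hf s.measurableSet_coe t.measurableSet_coe) ?_
  have : Tendsto (fun s => edist s t) (𝓝 t) (𝓝 0) := by
    simpa using (tendsto_id (x := 𝓝 t)).edist (tendsto_const_nhds (x := t))
  exact hf.norm.tendsto_setIntegral_nhds_zero this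

instance : EmptyCollection (MeasuredSets μ) := ⟨⟨∅, MeasurableSet.empty⟩⟩

@[simp]
lemma coe_empty : ((∅ : MeasuredSets μ) : Set α) = ∅ := rfl

variable [IsFiniteMeasure μ]

noncomputable def indicatorLp (s : MeasuredSets μ) : Lp ℝ 1 μ :=
  indicatorConstLp 1 s.measurableSet_coe (measure_ne_top μ s) 1

lemma isometry_indicatorLp : Isometry (indicatorLp (μ := μ)) := fun s t => by
  rw [indicatorLp, indicatorLp, edist_indicatorConstLp_eq_enorm, indicatorConstLp, Lp.enorm_toLp,
    eLpNorm_indicator_const (s.measurableSet_coe.symmDiff t.measurableSet_coe) one_ne_zero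
      ENNReal.one_ne_top, edist_def]
  simp

/-- Where `s` and `{g > 1/2}` differ, `|1_s - g| ≥ 1/2`: this locates the limit set of an
`L¹`-Cauchy sequence of indicators. -/
lemma measure_symmDiff_le_two_mul_edist (s : MeasuredSets μ) (g : Lp ℝ 1 μ) :
    μ ((s : Set α) ∆ {x | 1 / 2 < g x}) ≤ 2 * edist (indicatorLp s) g := by
  have hS : MeasurableSet ((s : Set α) ∆ {x | 1 / 2 < g x}) :=
    s.measurableSet_coe.symmDiff
      (measurableSet_lt measurable_const (Lp.stronglyMeasurable g).measurable)
  rw [Lp.edist_def, eLpNorm_one_eq_lintegral_enorm, ← lintegral_const_mul' _ _ (by simp),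
    ← lintegral_indicator_one hS]
  refine lintegral_mono_ae ?_
  filter_upwards [indicatorConstLp_coeFn (p := 1) (hs := s.measurableSet_coe)
    (hμs := measure_ne_top μ s) (c := (1 : ℝ))] with x hx
  simp only [Pi.sub_apply, indicatorLp, hx]
  by_cases hxS : x ∈ (s : Set α) ∆ {x | 1 / 2 < g x}
  · rw [indicator_of_mem hxS, Pi.one_apply, Real.enorm_eq_ofReal_abs, ← ENNReal.ofReal_ofNat 2,
      ← ENNReal.ofReal_mul zero_le_two, ENNReal.one_le_ofReal]
    rcases mem_symmDiff.1 hxS with ⟨hxs, hxg⟩ | ⟨hxg, hxs⟩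
    · simp only [mem_ofPred_eq, not_lt] at hxg
      rw [indicator_of_mem hxs, abs_of_nonneg (by linarith)]
      linarith
    · simp only [mem_ofPred_eq] at hxg
      rw [indicator_of_notMem hxs, zero_sub, abs_neg, abs_of_pos (by linarith)]
      linarith
  · rw [indicator_of_notMem hxS]
    exact zero_le

instance : CompleteSpace (MeasuredSets μ) := by
  refine EMetric.complete_of_cauchySeq_tendsto fun u hu => ?_
  obtain ⟨g, hg⟩ :=
    cauchySeq_tendsto_of_complete (isometry_indicatorLp.uniformContinuous.comp_cauchySeq hu)
  refine ⟨⟨{x | 1 / 2 < g x},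
    measurableSet_lt measurable_const (Lp.stronglyMeasurable g).measurable⟩,
    tendsto_iff_edist_tendsto_0.2 ?_⟩
  have : Tendsto (fun n => 2 * edist (indicatorLp (u n)) g) atTop (𝓝 0) := by
    simpa using ENNReal.Tendsto.const_mul (tendsto_iff_edist_tendsto_0.1 hg)
      (Or.inr ENNReal.ofNat_ne_top)
  exact tendsto_of_tendsto_of_tendsto_of_le_of_le tendsto_const_nhds this (fun _ => zero_le)
    fun n => measure_symmDiff_le_two_mul_edist (u n) g

lemma dist_empty (s : MeasuredSets μ) : dist s ∅ = μ.real s := by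
  rw [dist_def]
  exact congrArg μ.real (symmDiff_bot _)

variable {f : ℕ → α → E}

lemma exists_ball_forall_norm_setIntegral_sub_le (hf : ∀ n, Integrable (f n) μ)
    (hcauchy : ∀ s : MeasuredSets μ, CauchySeq fun n => ∫ x in s, f n x ∂μ) {η : ℝ} (hη : 0 < η) :
    ∃ N, ∃ s₀ : MeasuredSets μ, ∃ r > 0, ∀ s ∈ Metric.ball s₀ r, ∀ n ≥ N,
      ‖∫ x in s, f n x ∂μ - ∫ x in s, f N x ∂μ‖ ≤ η := by
  set F : ℕ → Set (MeasuredSets μ) := fun N =>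
    ⋂ n ≥ N, {s | ‖∫ x in s, f n x ∂μ - ∫ x in s, f N x ∂μ‖ ≤ η}
  have hF_closed (N : ℕ) : IsClosed (F N) := isClosed_biInter fun n _ =>
    isClosed_le ((continuous_setIntegral (hf n)).sub (continuous_setIntegral (hf N))).norm
      continuous_const
  have hF_cover : ⋃ N, F N = univ := eq_univ_of_forall fun s => by
    obtain ⟨N, hN⟩ := Metric.cauchySeq_iff'.1 (hcauchy s) η hη
    exact mem_iUnion.2 ⟨N, mem_iInter₂.2 fun n hn => by simpa [dist_eq_norm] using (hN n hn).le⟩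
  have : Nonempty (MeasuredSets μ) := ⟨∅⟩
  obtain ⟨N, s₀, hs₀⟩ := nonempty_interior_of_iUnion_of_closed hF_closed hF_cover
  obtain ⟨r, hr, hball⟩ := Metric.mem_nhds_iff.1 (mem_interior_iff_mem_nhds.1 hs₀)
  exact ⟨N, s₀, r, hr, fun s hs n hn => mem_iInter₂.1 (hball hs) n hn⟩

lemma eventually_forall_norm_setIntegral_lt (hf : ∀ n, Integrable (f n) μ)
    (hcauchy : ∀ s : MeasuredSets μ, CauchySeq fun n => ∫ x in s, f n x ∂μ) {ε : ℝ} (hε : 0 < ε) :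
    ∀ᶠ s : MeasuredSets μ in 𝓝 ∅, ∀ n, ‖∫ x in s, f n x ∂μ‖ < ε := by
  obtain ⟨N, s₀, r, hr, hball⟩ :=
    exists_ball_forall_norm_setIntegral_sub_le hf hcauchy (η := ε / 3) (by positivity)
  have htail : ∀ᶠ s : MeasuredSets μ in 𝓝 ∅, ∀ n ≥ N,
      ‖∫ x in s, f n x ∂μ - ∫ x in s, f N x ∂μ‖ ≤ 2 * (ε / 3) := by
    filter_upwards [Metric.ball_mem_nhds _ hr] with A hA n hn
    rw [Metric.mem_ball, dist_empty] at hA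
    let U : MeasuredSets μ := ⟨s₀ ∪ A, s₀.measurableSet_coe.union A.measurableSet_coe⟩
    let D : MeasuredSets μ := ⟨s₀ \ A, s₀.measurableSet_coe.diff A.measurableSet_coe⟩
    have hU : U ∈ Metric.ball s₀ r := by
      rw [Metric.mem_ball, dist_def]
      refine lt_of_le_of_lt (measureReal_mono (?_ : ((s₀ : Set α) ∪ A) ∆ s₀ ⊆ A)) hA
      intro x
      simp only [mem_symmDiff, mem_union]
      tauto
    have hD : D ∈ Metric.ball s₀ r := by
      rw [Metric.mem_ball, dist_def]
      refine lt_of_le_of_lt (measureReal_mono (?_ : ((s₀ : Set α) \ A) ∆ s₀ ⊆ A)) hA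
      intro x
      simp only [mem_symmDiff, Set.mem_sdiff]
      tauto
    have hsplit (k : ℕ) : ∫ x in A, f k x ∂μ = ∫ x in U, f k x ∂μ - ∫ x in D, f k x ∂μ := by
      change _ = ∫ x in (s₀ : Set α) ∪ A, f k x ∂μ - ∫ x in (s₀ : Set α) \ A, f k x ∂μ
      rw [← sdiff_union_self, setIntegral_union disjoint_sdiff_left A.measurableSet_coe
        (hf k).integrableOn (hf k).integrableOn, add_sub_cancel_left]
    rw [hsplit, hsplit]
    calc _ = ‖(∫ x in U, f n x ∂μ - ∫ x in U, f N x ∂μ)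
            - (∫ x in D, f n x ∂μ - ∫ x in D, f N x ∂μ)‖ := by
          congr 1; abel
      _ ≤ ε / 3 + ε / 3 := (norm_sub_le _ _).trans (add_le_add (hball U hU n hn) (hball D hD n hn))
      _ = 2 * (ε / 3) := by ring
  have hhead : ∀ᶠ s : MeasuredSets μ in 𝓝 ∅, ∀ n ∈ Iic N, ‖∫ x in s, f n x ∂μ‖ < ε / 3 := by
    refine (eventually_all_finite (finite_Iic N)).2 fun n _ => ?_
    have := ((continuous_setIntegral (hf n)).tendsto ∅).norm
    simp only [coe_empty, Measure.restrict_empty, integral_zero_measure, norm_zero] at this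
    exact this.eventually_lt_const (by positivity)
  filter_upwards [htail, hhead] with A hAtail hAhead n
  rcases le_total n N with hn | hn
  · exact (hAhead n hn).trans (by linarith)
  · calc ‖∫ x in A, f n x ∂μ‖
        ≤ ‖∫ x in A, f n x ∂μ - ∫ x in A, f N x ∂μ‖ + ‖∫ x in A, f N x ∂μ‖ :=
          norm_le_norm_sub_add _ _
      _ < 2 * (ε / 3) + ε / 3 := add_lt_add_of_le_of_lt (hAtail n hn) (hAhead N (mem_Iic.2 le_rfl))
      _ = ε := by ring

end MeasuredSets
end MeasureTheory

/-- Vitali–Hahn–Saks type lemma. -/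
theorem stmt_14 {X : Type*} [MeasurableSpace X] (μ : MeasureTheory.Measure X)
    [MeasureTheory.IsFiniteMeasure μ] (f : ℕ → X → ℝ)
    (hint : ∀ n, MeasureTheory.Integrable (f n) μ)
    (hlim : ∀ E : Set X, MeasurableSet E →
      ∃ L : ℝ, Filter.Tendsto (fun n => ∫ x in E, f n x ∂μ) Filter.atTop (nhds L)) :
    ∀ ε : ℝ, 0 < ε → ∃ δ : ℝ, 0 < δ ∧
      ∀ A : Set X, MeasurableSet A → μ A < ENNReal.ofReal δ →
        ∀ n, (∫ x in A, |f n x| ∂μ) < ε := by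
  intro ε hε
  have hcauchy (s : MeasuredSets μ) : CauchySeq fun n => ∫ x in s, f n x ∂μ :=
    (hlim s s.measurableSet_coe).choose_spec.cauchySeq
  obtain ⟨δ, hδ, hsmall⟩ := Metric.eventually_nhds_iff.1
    (MeasuredSets.eventually_forall_norm_setIntegral_lt hint hcauchy (half_pos hε))
  refine ⟨δ, hδ, fun A hA hμA n => ?_⟩
  have hsub (s : Set X) (hs : MeasurableSet s) : |∫ x in s, f n x ∂μ.restrict A| < ε / 2 := by
    rw [Measure.restrict_restrict hs]
    let B : MeasuredSets μ := ⟨s ∩ A, hs.inter hA⟩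
    have hB : dist B ∅ < δ := by
      rw [MeasuredSets.dist_empty]
      exact (measureReal_mono inter_subset_right).trans_lt (ENNReal.toReal_lt_of_lt_ofReal hμA)
    exact (Real.norm_eq_abs _).symm ▸ hsmall hB n
  calc ∫ x in A, |f n x| ∂μ
      < 2 * (ε / 2) := integral_abs_lt_two_mul_of_forall_abs_setIntegral_lt (hint n).restrict hsub
    _ = ε := by ring
end

section
/- Let $f \in L^1[-1/2,1/2]$ with Fourier series $\sum_{n \ge 2}\frac{\cos(2\pi n t)}{\log n}$. Then the family of partial sums $\{S_N(f,\cdot)\}_{N \ge 1}$ is NOT uniformly integrable on $[-1/2,1/2]$ with Lebesgue measure. -/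
open Real Set Finset MeasureTheory

/-!
Test `S_N` against `sin (2πNt)` on `[0, b]`. By the product-to-sum formula,
`∫₀ᵇ cos (2πnt) sin (2πNt) dt` is half the sum of the two integrals
`∫₀ᵇ sin (2π(N ± n)t) dt = (1 - cos (2π(N ± n)b)) / (2π(N ± n))`, both nonnegative,
so `∫₀ᵇ |S_N| ≥ (2 log N)⁻¹ ∑_{m < N - 1} (1 - cos (2πmb)) / (2πm)`.
For `b = 1/(2K)` and `N = 2KJ + 2`, pairing `m` with `m + K`, where the cosine changes sign,
bounds this sum below by the harmonic number `H_J ≥ log (J + 1)`. Taking `J = 2K + 1` makes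
`∫ |S_N| ≥ 1/(8π)` on the interval `[0, 1/(2K)]`, whose length tends to `0`.
-/

-- At `c = 0` both sides vanish, the right one as the junk value `0 / 0`.
lemma integral_sin_mul (b c : ℝ) :
    ∫ t in (0 : ℝ)..b, sin (c * t) = (1 - cos (c * b)) / c := by
  rcases eq_or_ne c 0 with rfl | hc
  · simp
  rw [intervalIntegral.integral_comp_mul_left sin hc]
  simp [integral_sin, div_eq_inv_mul]

lemma integral_sin_mul_nonneg (b : ℝ) {c : ℝ} (hc : 0 ≤ c) :
    0 ≤ ∫ t in (0 : ℝ)..b, sin (c * t) := by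
  rw [integral_sin_mul]
  exact div_nonneg (by linarith [cos_le_one (c * b)]) hc

lemma integral_cos_mul_mul_sin_mul (a c b : ℝ) :
    ∫ t in (0 : ℝ)..b, cos (a * t) * sin (c * t)
      = ((∫ t in (0 : ℝ)..b, sin ((c + a) * t))
          + ∫ t in (0 : ℝ)..b, sin ((c - a) * t)) / 2 := by
  have product_to_sum :
      ∀ t, cos (a * t) * sin (c * t) = (sin ((c + a) * t) + sin ((c - a) * t)) / 2 := by
    intro t; rw [add_mul, sub_mul, sin_add, sin_sub]; ring
  simp_rw [product_to_sum]
  rw [intervalIntegral.integral_div, intervalIntegral.integral_add] <;>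
    exact (continuous_sin.comp (continuous_const_mul _)).intervalIntegrable _ _

lemma sum_Icc_two_comp_sub (N : ℕ) (g : ℕ → ℝ) :
    ∑ n ∈ Icc 2 N, g (N - n) = ∑ m ∈ range (N - 1), g m := by
  rw [← Finset.Ico_add_one_right_eq_Icc, sum_Ico_reflect g 2 le_rfl, range_eq_Ico]
  congr 2; omega

noncomputable def logCosPartialSum (N : ℕ) (t : ℝ) : ℝ :=
  ∑ n ∈ Icc 2 N, cos (2 * π * n * t) / log n

lemma continuous_logCosPartialSum (N : ℕ) : Continuous (logCosPartialSum N) :=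
  continuous_finsetSum _ fun _ _ => (continuous_cos.comp (continuous_const_mul _)).div_const _

lemma integral_sin_sub_div_log_le {n N : ℕ} (hn : 2 ≤ n) (hnN : n ≤ N) (b : ℝ) :
    (∫ t in (0 : ℝ)..b, sin (2 * π * (N - n : ℕ) * t)) / (2 * log N)
      ≤ (∫ t in (0 : ℝ)..b, cos (2 * π * n * t) * sin (2 * π * N * t)) / log n := by
  have hlog_n : 0 < log n := log_pos (by exact_mod_cast hn)
  have hlog_le : log n ≤ log N := log_le_log (by positivity) (by exact_mod_cast hnN)
  have hdiff : 2 * π * N - 2 * π * n = 2 * π * (N - n : ℕ) := by push_cast [hnN]; ring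
  have hplus := integral_sin_mul_nonneg b (by positivity : 0 ≤ 2 * π * N + 2 * π * n)
  have hminus := integral_sin_mul_nonneg b (by positivity : (0 : ℝ) ≤ 2 * π * (N - n : ℕ))
  rw [integral_cos_mul_mul_sin_mul, hdiff]
  calc _ ≤ (∫ t in (0 : ℝ)..b, sin (2 * π * (N - n : ℕ) * t)) / (2 * log n) := by gcongr
    _ ≤ _ := by rw [div_div]; gcongr; linarith

lemma sum_integral_sin_div_le_integral_mul_sin (N : ℕ) (b : ℝ) :
    (∑ m ∈ range (N - 1), ∫ t in (0 : ℝ)..b, sin (2 * π * m * t)) / (2 * log N)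
      ≤ ∫ t in (0 : ℝ)..b, logCosPartialSum N t * sin (2 * π * N * t) := by
  simp_rw [logCosPartialSum, sum_mul, div_mul_eq_mul_div]
  rw [intervalIntegral.integral_finsetSum
      fun _ _ => (by fun_prop : Continuous _).intervalIntegrable _ _,
    ← sum_Icc_two_comp_sub N, sum_div]
  refine sum_le_sum fun n hn => ?_
  rw [intervalIntegral.integral_div]
  exact integral_sin_sub_div_log_le (Finset.mem_Icc.1 hn).1 (Finset.mem_Icc.1 hn).2 b

lemma integral_mul_sin_le_integral_abs {F : ℝ → ℝ} (hF : Continuous F) {b : ℝ}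
    (hb : 0 ≤ b) (c : ℝ) :
    ∫ t in (0 : ℝ)..b, F t * sin (c * t) ≤ ∫ t in Icc 0 b, |F t| := by
  rw [intervalIntegral.integral_of_le hb, ← integral_Icc_eq_integral_Ioc]
  refine setIntegral_mono_on (by fun_prop : Continuous _).integrableOn_Icc
    hF.abs.integrableOn_Icc measurableSet_Icc fun t _ => ?_
  calc F t * sin (c * t) ≤ |F t * sin (c * t)| := le_abs_self _
    _ = |F t| * |sin (c * t)| := abs_mul _ _
    _ ≤ |F t| := mul_le_of_le_one_right (abs_nonneg _) (abs_sin_le_one _)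

lemma two_div_add_le {m a c : ℝ} (hm : 0 < m) (ha : 0 ≤ a) (hc : c ≤ 1) :
    2 / (m + a) ≤ (1 - c) / m + (1 + c) / (m + a) := by
  have : (1 - c) / (m + a) ≤ (1 - c) / m := by gcongr; linarith
  calc 2 / (m + a) = (1 - c) / (m + a) + (1 + c) / (m + a) := by ring
    _ ≤ _ := by gcongr

lemma inv_add_one_le_sum_one_sub_cos_div (K j : ℕ) (hK : 0 < K) :
    ((j : ℝ) + 1)⁻¹ ≤ ∑ i ∈ range (2 * K),
      (1 - cos (π * (2 * K * j + i + 1 : ℕ) / K)) / (2 * K * j + i + 1 : ℕ) := by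
  have hKR : (0 : ℝ) < K := by exact_mod_cast hK
  have hsplit : range (2 * K) = range (K + K) := by rw [two_mul]
  rw [hsplit, sum_range_add, ← sum_add_distrib]
  have hpair : ∀ i ∈ range K, (K * (j + 1) : ℝ)⁻¹ ≤
      (1 - cos (π * (2 * K * j + i + 1 : ℕ) / K)) / (2 * K * j + i + 1 : ℕ)
        + (1 - cos (π * (2 * K * j + (K + i) + 1 : ℕ) / K))
          / (2 * K * j + (K + i) + 1 : ℕ) := by
    intro i hi
    have hiK : (i : ℝ) + 1 ≤ K := by exact_mod_cast mem_range.1 hi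
    set m : ℝ := ((2 * K * j + i + 1 : ℕ) : ℝ) with hm
    have hshift : ((2 * K * j + (K + i) + 1 : ℕ) : ℝ) = m + K := by rw [hm]; push_cast; ring
    have hcos : cos (π * (m + K) / K) = -cos (π * m / K) := by
      rw [show π * (m + K) / K = π * m / K + π by field_simp, cos_add_pi]
    have hm0 : 0 < m := by rw [hm]; positivity
    have hmK : m + K ≤ 2 * (K * (j + 1)) := by rw [hm]; push_cast; linarith
    rw [hshift, hcos, sub_neg_eq_add]
    calc (K * (j + 1) : ℝ)⁻¹ = 2 / (2 * (K * (j + 1))) := by field_simp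
      _ ≤ 2 / (m + K) := by gcongr
      _ ≤ _ := two_div_add_le hm0 hKR.le (cos_le_one _)
  calc ((j : ℝ) + 1)⁻¹ = ∑ i ∈ range K, (K * (j + 1) : ℝ)⁻¹ := by
        rw [sum_const, card_range, nsmul_eq_mul]; field_simp
    _ ≤ _ := sum_le_sum hpair

lemma log_add_one_le_sum_one_sub_cos_div (K J : ℕ) (hK : 0 < K) :
    log (J + 1) ≤ ∑ m ∈ range (2 * K * J + 1), (1 - cos (π * m / K)) / m := by
  rw [sum_range_succ']
  have hblocks : ∀ J : ℕ, (harmonic J : ℝ) ≤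
      ∑ m ∈ range (2 * K * J), (1 - cos (π * (m + 1 : ℕ) / K)) / (m + 1 : ℕ) := by
    intro J
    induction J with
    | zero => simp
    | succ J ih =>
      rw [harmonic_succ, mul_add_one, sum_range_add]
      push_cast at ih ⊢
      gcongr
      simpa [add_assoc] using inv_add_one_le_sum_one_sub_cos_div K J hK
  have := log_add_one_le_harmonic J
  push_cast at this
  simpa using this.trans (hblocks J)

lemma log_div_le_integral_abs_logCosPartialSum (K J : ℕ) (hK : 0 < K) :
    log (J + 1) / (4 * π * log (2 * K * J + 2 : ℕ))
      ≤ ∫ t in Icc (0 : ℝ) (1 / (2 * K)), |logCosPartialSum (2 * K * J + 2) t| := by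
  have hKR : (0 : ℝ) < K := by exact_mod_cast hK
  have hlogN : 0 ≤ log (2 * K * J + 2 : ℕ) := log_nonneg (by norm_cast; omega)
  have hsum : ∑ m ∈ range (2 * K * J + 1), ∫ t in (0 : ℝ)..1 / (2 * K), sin (2 * π * m * t)
      = (∑ m ∈ range (2 * K * J + 1), (1 - cos (π * m / K)) / m) / (2 * π) := by
    rw [sum_div]
    refine sum_congr rfl fun m _ => ?_
    rw [integral_sin_mul, show 2 * π * m * (1 / (2 * K)) = π * m / K by field_simp]
    ring
  calc log (J + 1) / (4 * π * log (2 * K * J + 2 : ℕ))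
      = log (J + 1) / (2 * π) / (2 * log (2 * K * J + 2 : ℕ)) := by ring
    _ ≤ (∑ m ∈ range (2 * K * J + 1), ∫ t in (0 : ℝ)..1 / (2 * K), sin (2 * π * m * t))
          / (2 * log (2 * K * J + 2 : ℕ)) := by
        rw [hsum]; gcongr; exact log_add_one_le_sum_one_sub_cos_div K J hK
    _ ≤ ∫ t in (0 : ℝ)..1 / (2 * K), logCosPartialSum (2 * K * J + 2) t
          * sin (2 * π * (2 * K * J + 2 : ℕ) * t) := by
        simpa using sum_integral_sin_div_le_integral_mul_sin (2 * K * J + 2) (1 / (2 * K))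
    _ ≤ _ := integral_mul_sin_le_integral_abs (continuous_logCosPartialSum _) (by positivity) _

lemma inv_eight_pi_le_integral_abs_logCosPartialSum (K : ℕ) (hK : 0 < K) :
    1 / (8 * π) ≤
      ∫ t in Icc (0 : ℝ) (1 / (2 * K)), |logCosPartialSum (2 * K * (2 * K + 1) + 2) t| := by
  refine le_trans ?_ (log_div_le_integral_abs_logCosPartialSum K (2 * K + 1) hK)
  have hL : 0 < log ((2 * K + 1 : ℕ) + 1 : ℝ) := log_pos (by norm_cast; omega)
  have hN : log (2 * K * (2 * K + 1) + 2 : ℕ) ≤ 2 * log ((2 * K + 1 : ℕ) + 1 : ℝ) := by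
    calc _ ≤ log (((2 * K + 1 : ℕ) + 1 : ℝ) ^ 2) :=
          log_le_log (by positivity) (by norm_cast; nlinarith)
      _ = _ := by rw [log_pow]; norm_num
  have hN0 : 0 < log (2 * K * (2 * K + 1) + 2 : ℕ) := log_pos (by norm_cast; omega)
  rw [div_le_div_iff₀ (by positivity) (by positivity)]
  nlinarith [pi_pos]

theorem stmt_16_general
    -- the `N`th symmetric Fourier partial sum of `f`
    (S : ℕ → ℝ → ℝ)
    (hS : ∀ N t, S N t = ∑ n ∈ Finset.Icc 2 N, Real.cos (2 * Real.pi * n * t) / Real.log n) :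
    ¬ (∀ ε : ℝ, 0 < ε → ∃ δ : ℝ, 0 < δ ∧
        ∀ A : Set ℝ, MeasurableSet A → A ⊆ Set.Icc (-(1/2) : ℝ) (1/2) →
          MeasureTheory.volume A < ENNReal.ofReal δ →
          ∀ N : ℕ, 1 ≤ N → (∫ t in A, |S N t|) < ε) := by
  obtain rfl : S = logCosPartialSum := funext₂ hS
  intro huniform
  obtain ⟨δ, hδ, hsmall⟩ := huniform (1 / (8 * π)) (by positivity)
  obtain ⟨k, hk⟩ := exists_nat_one_div_lt hδ
  set K := k + 1
  have hK : (1 : ℝ) ≤ K := by simp [K]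
  have hlen : 1 / (2 * K) < δ :=
    lt_of_le_of_lt (by gcongr; push_cast [K]; linarith) hk
  have hsub : Icc (0 : ℝ) (1 / (2 * K)) ⊆ Icc (-(1 / 2)) (1 / 2) :=
    Icc_subset_Icc (by norm_num) (by gcongr; linarith)
  have hvol : volume (Icc (0 : ℝ) (1 / (2 * K))) < ENNReal.ofReal δ := by
    rw [volume_Icc, sub_zero]
    exact (ENNReal.ofReal_lt_ofReal_iff hδ).2 hlen
  exact (inv_eight_pi_le_integral_abs_logCosPartialSum K k.succ_pos).not_gt
    (hsmall _ measurableSet_Icc hsub hvol _ (by omega))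

theorem stmt_16 (f : ℝ → ℝ)
    (hint : MeasureTheory.IntegrableOn f (Set.Icc (-(1/2) : ℝ) (1/2)))
    -- `f` has Fourier series `∑_{n ≥ 2} cos(2πnt)/log n`:
    (hcos : ∀ n : ℕ, (∫ t in Set.Icc (-(1/2) : ℝ) (1/2), f t * Real.cos (2 * Real.pi * n * t))
      = if 2 ≤ n then 1 / (2 * Real.log n) else 0)
    (hsin : ∀ n : ℕ, (∫ t in Set.Icc (-(1/2) : ℝ) (1/2), f t * Real.sin (2 * Real.pi * n * t)) = 0)
    -- the `N`th symmetric Fourier partial sum of `f`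
    (S : ℕ → ℝ → ℝ)
    (hS : ∀ N t, S N t = ∑ n ∈ Finset.Icc 2 N, Real.cos (2 * Real.pi * n * t) / Real.log n) :
    ¬ (∀ ε : ℝ, 0 < ε → ∃ δ : ℝ, 0 < δ ∧
        ∀ A : Set ℝ, MeasurableSet A → A ⊆ Set.Icc (-(1/2) : ℝ) (1/2) →
          MeasureTheory.volume A < ENNReal.ofReal δ →
          ∀ N : ℕ, 1 ≤ N → (∫ t in A, |S N t|) < ε) :=
  stmt_16_general S hS
end
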